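/- Suppose the Frugal-1U median process starts at the true median, i.e. m̃_0 = M with F(M) = 1/2. Then for every t ≥ 1 and every ε ∈ (0,1), the probability that |F(m̃_t) − 1/2| > 2·√(δ·ln(t/ε)) is at most ε (with the failure probability counting both the overshoot and undershoot events). -/

import Mathlib

/-!
The walk is a lazy birth–death chain on `ℤ`: from `y` it moves up with probability
`(1 - F y) / 2` and down with probability `F (y - 1) / 2`. Its reversible measure `π`, normalised
by `π M = 1`, has `π (x + 1) / π x = (1 - F x) / F x`. Since the walk starts at `M`, the law of
`m̃ₜ` stays below `π` for all `t`, because the transition kernel is monotone and leaves `π`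
invariant.

Once `|F - 1/2| ≥ a`, each step multiplies `π` by at most `e^{-4a}`. Every atom has mass `≤ δ`,
so climbing from level `a` to level `2a` takes at least `a / δ - 1` steps. Hence
`π x ≤ e^{4a - 4a²/δ}` wherever `|F x - 1/2| > 2a`. Only the `2t` points `x ≠ M` with
`|x - M| ≤ t` can be reached, so for `a = √(δ log (t/ε))` the probability is at most
`2t · e · (ε/t)⁴ ≤ ε` once `t/ε ≥ 2`. The remaining case, `t = 1`, is handled directly.
-/

open MeasureTheory ProbabilityTheory

theorem half_sub_div_half_add_le_exp {b g : ℝ} (hb : 0 ≤ b) (hb' : b < 1 / 2) (hbg : b ≤ g) :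
    (1 / 2 - g) / (1 / 2 + g) ≤ Real.exp (-4 * b) := by
  have hmono : (1 / 2 - g) / (1 / 2 + g) ≤ (1 - 2 * b) / (1 + 2 * b) := by
    rw [div_le_div_iff₀ (by linarith) (by linarith)]
    nlinarith
  -- `log (1 + x) - log (1 - x) = 2 artanh x ≥ 2x`, the first term of its power series
  have hlog : 4 * b ≤ Real.log (1 + 2 * b) - Real.log (1 - 2 * b) := by
    have hsum := Real.hasSum_log_sub_log_of_abs_lt_one (x := 2 * b)
      (by rw [abs_lt]; constructor <;> linarith)
    have := le_hasSum hsum 0 fun j _ => by positivity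
    norm_num at this
    linarith
  calc (1 / 2 - g) / (1 / 2 + g) ≤ (1 - 2 * b) / (1 + 2 * b) := hmono
    _ = Real.exp (Real.log (1 - 2 * b) - Real.log (1 + 2 * b)) := by
      rw [Real.exp_sub, Real.exp_log (by linarith), Real.exp_log (by linarith)]
    _ ≤ Real.exp (-4 * b) := Real.exp_le_exp.2 (by linarith)

theorem le_add_mul_of_le_add {G : ℕ → ℝ} {d : ℝ} (hG : ∀ n, G (n + 1) ≤ G n + d) (j k : ℕ) :
    G (j + k) ≤ G j + k * d := by
  induction k with
  | zero => simp
  | succ k ih =>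
    rw [← add_assoc]
    push_cast
    linarith [hG (j + k)]

theorem le_mul_pow_of_le_mul {P : ℕ → ℝ} {c : ℝ} (hc : 0 ≤ c) {j : ℕ}
    (hP : ∀ k, P (j + k + 1) ≤ P (j + k) * c) (k : ℕ) : P (j + k) ≤ P j * c ^ k := by
  induction k with
  | zero => simp
  | succ k ih =>
    calc P (j + (k + 1)) ≤ P (j + k) * c := hP k
      _ ≤ P j * c ^ k * c := mul_le_mul_of_nonneg_right ih hc
      _ = P j * c ^ (k + 1) := by ring

theorem le_exp_of_two_mul_lt {G P : ℕ → ℝ} {a d : ℝ} (ha : 0 < a) (ha' : a < 1 / 2) (hd : 0 < d)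
    (hG0 : G 0 = 0) (hG : Monotone G) (hGd : ∀ n, G (n + 1) ≤ G n + d)
    (hP0 : P 0 ≤ 1) (hP : ∀ n, 0 ≤ P n)
    (hPG : ∀ n, P (n + 1) ≤ P n * ((1 / 2 - G n) / (1 / 2 + G n)))
    {n : ℕ} (hn : 2 * a < G n) : P n ≤ Real.exp (4 * a - 4 * (a ^ 2 / d)) := by
  have hPanti : Antitone P := antitone_nat_of_succ_le fun k => by
    have hGk : 0 ≤ G k := hG0 ▸ hG k.zero_le
    refine (hPG k).trans (mul_le_of_le_one_right (hP k) ?_)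
    rw [div_le_one (by linarith)]
    linarith
  -- `j` is the first time `G` reaches `a`; from there to `n` it climbs at least `a` in steps `≤ d`
  have hex : ∃ j, a ≤ G j := ⟨n, by linarith⟩
  set j := Nat.find hex
  have hj : a ≤ G j := Nat.find_spec hex
  have hjn : j ≤ n := Nat.find_min' hex (by linarith)
  have hj0 : j ≠ 0 := fun h => by rw [h, hG0] at hj; linarith
  have hjpred : G (j - 1) < a := not_le.1 (Nat.find_min hex (by omega))
  have hclimb : a / d - 1 ≤ (n - j : ℕ) := by
    have h := le_add_mul_of_le_add hGd (j - 1) (n - j + 1)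
    rw [show j - 1 + (n - j + 1) = n by omega] at h
    rw [div_sub_one hd.ne', div_le_iff₀ hd]
    push_cast at h ⊢
    linarith
  have hdecay : P (j + (n - j)) ≤ P j * Real.exp (-4 * a) ^ (n - j) :=
    le_mul_pow_of_le_mul (Real.exp_pos _).le (fun k => (hPG (j + k)).trans
      (mul_le_mul_of_nonneg_left
        (half_sub_div_half_add_le_exp ha.le ha' (hj.trans (hG (Nat.le_add_right j k)))) (hP _)))
      (n - j)
  rw [Nat.add_sub_cancel' hjn, ← Real.exp_nat_mul] at hdecay
  calc P n ≤ P j * Real.exp ((n - j : ℕ) * (-4 * a)) := hdecay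
    _ ≤ 1 * Real.exp ((n - j : ℕ) * (-4 * a)) :=
      mul_le_mul_of_nonneg_right ((hPanti j.zero_le).trans hP0) (Real.exp_pos _).le
    _ ≤ Real.exp (4 * a - 4 * (a ^ 2 / d)) := by
      rw [one_mul, Real.exp_le_exp]
      have : a * (a / d - 1) ≤ a * (n - j : ℕ) := mul_le_mul_of_nonneg_left hclimb ha.le
      have e : a * (a / d) = a ^ 2 / d := by ring
      nlinarith

theorem le_of_excessive_of_le_step {p : ℕ → ℤ → ℝ} {π up down stay : ℤ → ℝ}
    (hup : ∀ x, 0 ≤ up x) (hdown : ∀ x, 0 ≤ down x) (hstay : ∀ x, 0 ≤ stay x)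
    (hπ : ∀ x, π (x - 1) * up (x - 1) + π (x + 1) * down (x + 1) + π x * stay x ≤ π x)
    (hp0 : ∀ x, p 0 x ≤ π x)
    (hp : ∀ T x, p (T + 1) x ≤
      p T (x - 1) * up (x - 1) + p T (x + 1) * down (x + 1) + p T x * stay x)
    (T : ℕ) (x : ℤ) : p T x ≤ π x := by
  induction T generalizing x with
  | zero => exact hp0 x
  | succ T ih =>
    refine (hp T x).trans (le_trans ?_ (hπ x))
    gcongr <;> first | exact ih _ | exact hup _ | exact hdown _ | exact hstay _

noncomputable def intCdf (μ : Measure ℤ) (x : ℤ) : ℝ := μ.real (Set.Iic x)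

section intCdf

variable {μ : Measure ℤ}

theorem intCdf_nonneg (x : ℤ) : 0 ≤ intCdf μ x := measureReal_nonneg

theorem intCdf_mono [IsFiniteMeasure μ] : Monotone (intCdf μ) := fun _ _ h =>
  measureReal_mono (Set.Iic_subset_Iic.2 h)

theorem measureReal_Iio_eq_intCdf_sub_one (x : ℤ) : μ.real (Set.Iio x) = intCdf μ (x - 1) := by
  rw [intCdf, Set.Iic_sub_one_eq_Iio]

theorem measureReal_singleton_eq_intCdf_sub [IsFiniteMeasure μ] (x : ℤ) :
    μ.real {x} = intCdf μ x - intCdf μ (x - 1) := by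
  rw [← measureReal_Iio_eq_intCdf_sub_one, intCdf, ← Set.Iic_sdiff_Iio_same,
    measureReal_sdiff Set.Iio_subset_Iic_self measurableSet_Iio]

variable [IsProbabilityMeasure μ]

theorem intCdf_le_one (x : ℤ) : intCdf μ x ≤ 1 := measureReal_le_one

theorem measureReal_Ioi_eq_one_sub_intCdf (x : ℤ) : μ.real (Set.Ioi x) = 1 - intCdf μ x := by
  rw [← Set.compl_Iic, measureReal_compl measurableSet_Iic, probReal_univ, intCdf]

end intCdf

noncomputable def stationaryWeight (F : ℤ → ℝ) (M x : ℤ) : ℝ :=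
  if M ≤ x then ∏ k ∈ Finset.Ico M x, (1 - F k) / F k
  else ∏ k ∈ Finset.Ico x M, F k / (1 - F k)

section stationaryWeight

variable {F : ℤ → ℝ} {M : ℤ}

@[simp] theorem stationaryWeight_self : stationaryWeight F M M = 1 := by
  simp [stationaryWeight]

theorem stationaryWeight_nonneg (h0 : ∀ x, 0 ≤ F x) (h1 : ∀ x, F x ≤ 1) (x : ℤ) :
    0 ≤ stationaryWeight F M x := by
  unfold stationaryWeight
  split_ifs
  · exact Finset.prod_nonneg fun k _ => div_nonneg (sub_nonneg.2 (h1 k)) (h0 k)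
  · exact Finset.prod_nonneg fun k _ => div_nonneg (h0 k) (sub_nonneg.2 (h1 k))

theorem stationaryWeight_mul_one_sub (hF : Monotone F) (hM : F M = 1 / 2) (x : ℤ) :
    stationaryWeight F M x * (1 - F x) = stationaryWeight F M (x + 1) * F x := by
  rcases le_or_gt M x with hx | hx
  · have : F x ≠ 0 := by linarith [hF hx]
    rw [stationaryWeight, stationaryWeight, if_pos hx, if_pos (by omega),
      ← Finset.insert_Ico_right_eq_Ico_add_one hx, Finset.prod_insert (by simp)]
    field_simp
  · have : 1 - F x ≠ 0 := by linarith [hF hx.le]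
    have hx1 : stationaryWeight F M (x + 1) = ∏ k ∈ Finset.Ico (x + 1) M, F k / (1 - F k) := by
      rcases eq_or_lt_of_le (show x + 1 ≤ M by omega) with h | h
      · simp [h]
      · rw [stationaryWeight, if_neg (by omega)]
    rw [hx1, stationaryWeight, if_neg (by omega), ← Finset.insert_Ico_add_one_left_eq_Ico hx,
      Finset.prod_insert (by simp)]
    field_simp

theorem stationaryWeight_invariant (hF : Monotone F) (hM : F M = 1 / 2) (x : ℤ) :
    stationaryWeight F M (x - 1) * ((1 - F (x - 1)) / 2) +
      stationaryWeight F M (x + 1) * (F x / 2) +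
      stationaryWeight F M x * (1 / 2 + (F x - F (x - 1)) / 2) = stationaryWeight F M x := by
  have h1 := stationaryWeight_mul_one_sub hF hM (x - 1)
  have h2 := stationaryWeight_mul_one_sub hF hM x
  rw [sub_add_cancel] at h1
  linear_combination (1 / 2) * h1 - (1 / 2) * h2

theorem stationaryWeight_add_le_exp {a δ : ℝ} (ha : 0 < a) (ha' : a < 1 / 2) (hδ : 0 < δ)
    (hF : Monotone F) (h0 : ∀ x, 0 ≤ F x) (h1 : ∀ x, F x ≤ 1) (hM : F M = 1 / 2)
    (hjump : ∀ x, F x - F (x - 1) ≤ δ) {n : ℕ} (hn : 2 * a < F (M + n) - 1 / 2) :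
    stationaryWeight F M (M + n) ≤ Real.exp (4 * a - 4 * (a ^ 2 / δ)) := by
  refine le_exp_of_two_mul_lt (G := fun k : ℕ => F (M + k) - 1 / 2)
    (P := fun k : ℕ => stationaryWeight F M (M + k)) ha ha' hδ (by simp [hM])
    (fun i j hij => by dsimp only; linarith [hF (show M + i ≤ M + j by omega)]) (fun k => ?_)
    (by simp) (fun k => stationaryWeight_nonneg h0 h1 _) (fun k => ?_) hn
  · have := hjump (M + (k + 1 : ℕ))
    simp only [Nat.cast_succ, ← add_assoc, add_sub_cancel_right] at this ⊢
    linarith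
  · have hpos : 0 < F (M + k) := by linarith [hF (show M ≤ M + k by omega)]
    have hdb := stationaryWeight_mul_one_sub hF hM (M + k)
    rw [Nat.cast_succ, ← add_assoc, show 1 / 2 - (F (M + k) - 1 / 2) = 1 - F (M + k) by ring,
      show 1 / 2 + (F (M + k) - 1 / 2) = F (M + k) by ring, mul_div_assoc', le_div_iff₀ hpos, hdb]

theorem stationaryWeight_sub_le_exp {a δ : ℝ} (ha : 0 < a) (ha' : a < 1 / 2) (hδ : 0 < δ)
    (hF : Monotone F) (h0 : ∀ x, 0 ≤ F x) (h1 : ∀ x, F x ≤ 1) (hM : F M = 1 / 2)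
    (hjump : ∀ x, F x - F (x - 1) ≤ δ) {n : ℕ} (hn : 2 * a < 1 / 2 - F (M - n)) :
    stationaryWeight F M (M - n) ≤ Real.exp (4 * a - 4 * (a ^ 2 / δ)) := by
  refine le_exp_of_two_mul_lt (G := fun k : ℕ => 1 / 2 - F (M - k))
    (P := fun k : ℕ => stationaryWeight F M (M - k)) ha ha' hδ (by simp [hM])
    (fun i j hij => by dsimp only; linarith [hF (show M - j ≤ M - i by omega)]) (fun k => ?_)
    (by simp) (fun k => stationaryWeight_nonneg h0 h1 _) (fun k => ?_) hn
  · have := hjump (M - k)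
    simp only [Nat.cast_succ, sub_add_eq_sub_sub] at this ⊢
    linarith
  · have hk : F (M - (k + 1 : ℕ)) ≤ F (M - k) := hF (by omega)
    have hhalf : F (M - k) ≤ 1 / 2 := hM ▸ hF (by omega)
    have hdb := stationaryWeight_mul_one_sub hF hM (M - (k + 1 : ℕ))
    rw [show M - ((k + 1 : ℕ) : ℤ) + 1 = M - k by push_cast; ring] at hdb
    rw [show 1 / 2 - (1 / 2 - F (M - k)) = F (M - k) by ring,
      show 1 / 2 + (1 / 2 - F (M - k)) = 1 - F (M - k) by ring, mul_div_assoc',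
      le_div_iff₀ (by linarith)]
    nlinarith [stationaryWeight_nonneg h0 h1 (M := M) (M - k),
      stationaryWeight_nonneg h0 h1 (M := M) (M - (k + 1 : ℕ))]

theorem stationaryWeight_le_exp {a δ : ℝ} (ha : 0 < a) (hδ : 0 < δ)
    (hF : Monotone F) (h0 : ∀ x, 0 ≤ F x) (h1 : ∀ x, F x ≤ 1) (hM : F M = 1 / 2)
    (hjump : ∀ x, F x - F (x - 1) ≤ δ) {x : ℤ} (hx : 2 * a < |F x - 1 / 2|) :
    stationaryWeight F M x ≤ Real.exp (1 - 4 * (a ^ 2 / δ)) := by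
  have ha' : a < 1 / 4 := by linarith [abs_le.2 (⟨by linarith [h0 x], by linarith [h1 x]⟩ :
    -(1 / 2) ≤ F x - 1 / 2 ∧ F x - 1 / 2 ≤ 1 / 2)]
  refine le_trans ?_ (Real.exp_le_exp.2 (show 4 * a - 4 * (a ^ 2 / δ) ≤ _ by linarith))
  rcases le_or_gt M x with hMx | hxM
  · obtain ⟨n, rfl⟩ : ∃ n : ℕ, x = M + n := ⟨(x - M).toNat, by omega⟩
    rw [abs_of_nonneg (by linarith [hF hMx])] at hx
    exact stationaryWeight_add_le_exp ha (by linarith) hδ hF h0 h1 hM hjump hx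
  · obtain ⟨n, rfl⟩ : ∃ n : ℕ, x = M - n := ⟨(M - x).toNat, by omega⟩
    rw [abs_of_nonpos (by linarith [hF hxM.le])] at hx
    exact stationaryWeight_sub_le_exp ha (by linarith) hδ hF h0 h1 hM hjump (by linarith)

end stationaryWeight

theorem two_mul_mul_exp_le {t ε : ℝ} (hε : 0 < ε) (h : 2 * ε ≤ t) :
    2 * t * Real.exp (1 - 4 * Real.log (t / ε)) ≤ ε := by
  have ht : 0 < t := by linarith
  have hL : Real.log 2 ≤ Real.log (t / ε) :=
    Real.log_le_log two_pos (by rw [le_div_iff₀ hε]; linarith)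
  have hcube : Real.exp (1 - 3 * Real.log (t / ε)) ≤ 1 / 2 := by
    calc Real.exp (1 - 3 * Real.log (t / ε)) ≤ Real.exp (1 - 3 * Real.log 2) :=
          Real.exp_le_exp.2 (by linarith)
      _ = Real.exp 1 / 8 := by
          rw [Real.exp_sub, ← Real.log_rpow two_pos, Real.exp_log (by positivity)]
          norm_num
      _ ≤ 1 / 2 := by linarith [Real.exp_one_lt_d9]
  calc 2 * t * Real.exp (1 - 4 * Real.log (t / ε))
      = 2 * t * (Real.exp (1 - 3 * Real.log (t / ε)) * Real.exp (-Real.log (t / ε))) := by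
        rw [← Real.exp_add]; ring_nf
    _ ≤ 2 * t * (1 / 2 * (ε / t)) := by
        rw [Real.exp_neg, Real.exp_log (by positivity), inv_div]
        gcongr
    _ = ε := by field_simp

-- `z = (s, u)` is the fresh sample and the coin of the step.
noncomputable def frugalStep (y : ℤ) (z : ℤ × ℝ) : ℤ :=
  if y < z.1 ∧ 1 / 2 < z.2 then y + 1 else if z.1 < y ∧ 1 / 2 < z.2 then y - 1 else y

theorem measurable_frugalStep : Measurable (Function.uncurry frugalStep) := by
  refine measurable_from_prod_countable_right fun y => ?_
  dsimp only [Function.uncurry_apply_pair, frugalStep]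
  refine Measurable.ite ?_ measurable_const (Measurable.ite ?_ measurable_const measurable_const)
  · exact (measurableSet_lt measurable_const measurable_fst).inter
      (measurableSet_lt measurable_const measurable_snd)
  · exact (measurableSet_lt measurable_fst measurable_const).inter
      (measurableSet_lt measurable_const measurable_snd)

theorem frugalStep_eq_iff {y x : ℤ} {z : ℤ × ℝ} : frugalStep y z = x ↔
    (y = x - 1 ∧ z ∈ Set.Ioi (x - 1) ×ˢ Set.Ioi (1 / 2)) ∨
    (y = x + 1 ∧ z ∈ Set.Iio (x + 1) ×ˢ Set.Ioi (1 / 2)) ∨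
    (y = x ∧ z ∈ Set.univ ×ˢ Set.Iic (1 / 2) ∪ {x} ×ˢ Set.Ioi (1 / 2)) := by
  obtain ⟨s, u⟩ := z
  simp only [frugalStep, Set.mem_prod, Set.mem_union, Set.mem_Ioi, Set.mem_Iio, Set.mem_Iic,
    Set.mem_univ, Set.mem_singleton_iff, true_and]
  rcases le_or_gt u (1 / 2) with hu | hu
  · simp only [not_lt.2 hu, and_false, if_false, hu, true_or, and_true, false_or]
  · simp only [hu, and_true, not_le.2 hu, false_or]
    split_ifs <;> omega

theorem abs_frugalStep_sub_le (y : ℤ) (z : ℤ × ℝ) : |frugalStep y z - y| ≤ 1 := by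
  unfold frugalStep
  split_ifs <;> simp

theorem abs_sub_le_of_abs_succ_sub_le {m : ℕ → ℤ} (h : ∀ T, |m (T + 1) - m T| ≤ 1) (T : ℕ) :
    |m T - m 0| ≤ T := by
  induction T with
  | zero => simp
  | succ T ih =>
    push_cast
    linarith [abs_sub_le (m (T + 1)) (m T) (m 0), h T]

theorem measureReal_mem_le_of_abs_sub_le {Ω : Type*} [MeasurableSpace Ω] {P : Measure Ω}
    [IsFiniteMeasure P] {Y : Ω → ℤ} {M : ℤ} {t : ℕ} (hY : ∀ ω, |Y ω - M| ≤ t) {S : Set ℤ}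
    (hMS : M ∉ S) {B : ℝ} (hB0 : 0 ≤ B) (hB : ∀ x ∈ S, P.real {ω | Y ω = x} ≤ B) :
    P.real {ω | Y ω ∈ S} ≤ 2 * t * B := by
  classical
  set T := ((Finset.Icc (M - t) (M + t)).erase M).filter (· ∈ S)
  have hcard : T.card ≤ 2 * t := by
    refine (Finset.card_filter_le _ _).trans ?_
    rw [Finset.card_erase_of_mem (by simp), Int.card_Icc]
    omega
  calc P.real {ω | Y ω ∈ S} ≤ P.real (⋃ x ∈ T, {ω | Y ω = x}) := by
        refine measureReal_mono (fun ω hω => Set.mem_biUnion ?_ rfl) (measure_ne_top _ _)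
        have := abs_le.1 (hY ω)
        rw [Finset.mem_coe, Finset.mem_filter, Finset.mem_erase, Finset.mem_Icc]
        exact ⟨⟨fun h => hMS (h ▸ hω), by omega, by omega⟩, hω⟩
    _ ≤ ∑ x ∈ T, P.real {ω | Y ω = x} := measureReal_biUnion_finset_le _ _
    _ ≤ ∑ _x ∈ T, B := Finset.sum_le_sum fun x hx => hB x (Finset.mem_filter.1 hx).2
    _ ≤ 2 * t * B := by
        rw [Finset.sum_const, nsmul_eq_mul]
        gcongr
        exact_mod_cast hcard

theorem ProbabilityTheory.iIndepFun.indepFun_of_recursion {Ω β γ : Type*} {mΩ : MeasurableSpace Ω}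
    {mβ : MeasurableSpace β} {mγ : MeasurableSpace γ} {P : Measure Ω} {X : ℕ → Ω → β}
    {Y : ℕ → Ω → γ} {f : γ → β → γ} (hX : iIndepFun X P) (hXm : ∀ i, Measurable (X i))
    (hf : Measurable (Function.uncurry f)) (y₀ : γ) (hY0 : ∀ ω, Y 0 ω = y₀)
    (hY : ∀ t ω, Y (t + 1) ω = f (Y t ω) (X (t + 1) ω)) (t : ℕ) :
    IndepFun (Y t) (X (t + 1)) P := by
  let 𝓕 : ℕ → MeasurableSpace Ω := fun t => ⨆ i ∈ Set.Iic t, mβ.comap (X i)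
  have hX𝓕 : ∀ {i t}, i ≤ t → Measurable[𝓕 t] (X i) := fun hit =>
    Measurable.of_comap_le (le_iSup₂ (f := fun i (_ : i ∈ Set.Iic _) => mβ.comap (X i)) _ hit)
  have hY𝓕 : ∀ t, Measurable[𝓕 t] (Y t) := by
    intro t
    induction t with
    | zero => simp only [show Y 0 = fun _ => y₀ from funext hY0, measurable_const]
    | succ t ih =>
      rw [show Y (t + 1) = fun ω => Function.uncurry f (Y t ω, X (t + 1) ω) from funext (hY t)]
      have hmono : 𝓕 t ≤ 𝓕 (t + 1) := biSup_mono fun i hi => le_trans hi (Nat.le_succ t)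
      exact hf.comp ((ih.mono hmono le_rfl).prodMk (hX𝓕 le_rfl))
  have hind := indep_iSup_of_disjoint (fun i => (hXm i).comap_le)
    ((iIndepFun_iff_iIndep _ _ _).1 hX) (S := Set.Iic t) (T := {t + 1}) (by simp)
  rw [IndepFun_iff_Indep]
  refine indep_of_indep_of_le_right (indep_of_indep_of_le_left hind (hY𝓕 t).comap_le) ?_
  exact le_iSup₂ (f := fun i (_ : i ∈ ({t + 1} : Set ℕ)) => mβ.comap (X i)) (t + 1) rfl

theorem measureReal_restrict_Icc_Ioi_half :
    (volume.restrict (Set.Icc (0 : ℝ) 1)).real (Set.Ioi (1 / 2)) = 1 / 2 := by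
  rw [measureReal_restrict_apply measurableSet_Ioi,
    show Set.Ioi (1 / 2 : ℝ) ∩ Set.Icc 0 1 = Set.Ioc (1 / 2) 1 by
      ext; simp only [Set.mem_inter_iff, Set.mem_Ioi, Set.mem_Icc, Set.mem_Ioc]; grind]
  norm_num

theorem measureReal_restrict_Icc_Iic_half :
    (volume.restrict (Set.Icc (0 : ℝ) 1)).real (Set.Iic (1 / 2)) = 1 / 2 := by
  rw [measureReal_restrict_apply measurableSet_Iic,
    show Set.Iic (1 / 2 : ℝ) ∩ Set.Icc 0 1 = Set.Icc 0 (1 / 2) by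
      ext; simp only [Set.mem_inter_iff, Set.mem_Iic, Set.mem_Icc]; grind]
  norm_num

theorem measureReal_frugalStep_eq_le {Ω : Type*} [MeasurableSpace Ω] {P : Measure Ω}
    {μ : Measure ℤ} [IsProbabilityMeasure μ] {Y : Ω → ℤ}
    {Z : Ω → ℤ × ℝ} (hZ : Measurable Z) (hYZ : IndepFun Y Z P)
    (hlaw : P.map Z = μ.prod (volume.restrict (Set.Icc (0 : ℝ) 1))) (x : ℤ) :
    P.real {ω | frugalStep (Y ω) (Z ω) = x} ≤
      P.real {ω | Y ω = x - 1} * ((1 - intCdf μ (x - 1)) / 2) +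
      P.real {ω | Y ω = x + 1} * (intCdf μ x / 2) +
      P.real {ω | Y ω = x} * (1 / 2 + (intCdf μ x - intCdf μ (x - 1)) / 2) := by
  set ν := volume.restrict (Set.Icc (0 : ℝ) 1)
  have hjoint : ∀ y K, MeasurableSet K →
      P.real ({ω | Y ω = y} ∩ Z ⁻¹' K) = P.real {ω | Y ω = y} * (μ.prod ν).real K := by
    intro y K hK
    simp only [measureReal_def]
    rw [show {ω | Y ω = y} = Y ⁻¹' {y} from rfl,
      hYZ.measure_inter_preimage_eq_mul _ _ (measurableSet_singleton y) hK,
      ← Measure.map_apply hZ hK, hlaw, ENNReal.toReal_mul]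
  have hsplit : {ω | frugalStep (Y ω) (Z ω) = x} =
      ({ω | Y ω = x - 1} ∩ Z ⁻¹' (Set.Ioi (x - 1) ×ˢ Set.Ioi (1 / 2))) ∪
      ({ω | Y ω = x + 1} ∩ Z ⁻¹' (Set.Iio (x + 1) ×ˢ Set.Ioi (1 / 2))) ∪
      ({ω | Y ω = x} ∩ Z ⁻¹' (Set.univ ×ˢ Set.Iic (1 / 2) ∪ {x} ×ˢ Set.Ioi (1 / 2))) := by
    ext ω
    simp only [Set.mem_ofPred_eq, frugalStep_eq_iff, Set.mem_union, Set.mem_inter_iff,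
      Set.mem_preimage, or_assoc]
  rw [hsplit]
  refine ((measureReal_union_le _ _).trans (add_le_add_left (measureReal_union_le _ _) _)).trans ?_
  rw [hjoint _ _ (measurableSet_Ioi.prod measurableSet_Ioi),
    hjoint _ _ (measurableSet_Iio.prod measurableSet_Ioi),
    hjoint _ _ ((MeasurableSet.univ.prod measurableSet_Iic).union
      ((measurableSet_singleton x).prod measurableSet_Ioi)),
    measureReal_prod_prod, measureReal_prod_prod, measureReal_Ioi_eq_one_sub_intCdf,
    measureReal_Iio_eq_intCdf_sub_one, add_sub_cancel_right, measureReal_restrict_Icc_Ioi_half]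
  gcongr
  · exact le_of_eq (by ring)
  · exact le_of_eq (by ring)
  · refine (measureReal_union_le _ _).trans (le_of_eq ?_)
    rw [measureReal_prod_prod, measureReal_prod_prod, probReal_univ,
      measureReal_restrict_Icc_Iic_half, measureReal_restrict_Icc_Ioi_half,
      measureReal_singleton_eq_intCdf_sub]
    ring

theorem measureReal_frugalStep_ne_le {Ω : Type*} [MeasurableSpace Ω] {P : Measure Ω}
    [IsFiniteMeasure P] {μ : Measure ℤ} [IsProbabilityMeasure μ] {Z : Ω → ℤ × ℝ} (hZ : Measurable Z)
    (hlaw : P.map Z = μ.prod (volume.restrict (Set.Icc (0 : ℝ) 1))) (y : ℤ) :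
    P.real {ω | frugalStep y (Z ω) ≠ y} ≤ 1 / 2 := by
  have hsub : {ω | frugalStep y (Z ω) ≠ y} ⊆ Z ⁻¹' (Set.univ ×ˢ Set.Ioi (1 / 2)) := by
    intro ω hω
    by_contra hu
    simp only [Set.mem_preimage, Set.mem_prod, Set.mem_univ, Set.mem_Ioi, true_and, not_lt] at hu
    exact hω (by simp only [frugalStep, not_lt.2 hu, and_false, if_false])
  refine le_of_le_of_eq (measureReal_mono hsub (measure_ne_top _ _)) ?_
  rw [measureReal_def, ← Measure.map_apply hZ (MeasurableSet.univ.prod measurableSet_Ioi), hlaw,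
    ← measureReal_def, measureReal_prod_prod, probReal_univ, measureReal_restrict_Icc_Ioi_half,
    one_mul]

theorem measureReal_eq_le_stationaryWeight {Ω : Type*} [MeasurableSpace Ω] {P : Measure Ω}
    [IsProbabilityMeasure P] {μ : Measure ℤ} [IsProbabilityMeasure μ] {X : ℕ → Ω → ℤ × ℝ}
    (hX : ∀ i, Measurable (X i)) (hind : iIndepFun X P)
    (hlaw : ∀ i, P.map (X i) = μ.prod (volume.restrict (Set.Icc (0 : ℝ) 1)))
    {m : ℕ → Ω → ℤ} {M : ℤ} (hM : intCdf μ M = 1 / 2) (hm0 : ∀ ω, m 0 ω = M)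
    (hm : ∀ T ω, m (T + 1) ω = frugalStep (m T ω) (X (T + 1) ω)) (T : ℕ) (x : ℤ) :
    P.real {ω | m T ω = x} ≤ stationaryWeight (intCdf μ) M x := by
  refine le_of_excessive_of_le_step (p := fun T x => P.real {ω | m T ω = x})
    (up := fun y => (1 - intCdf μ y) / 2) (down := fun y => intCdf μ (y - 1) / 2)
    (stay := fun y => 1 / 2 + (intCdf μ y - intCdf μ (y - 1)) / 2)
    (fun y => by linarith [intCdf_le_one (μ := μ) y])
    (fun y => by linarith [intCdf_nonneg (μ := μ) (y - 1)])
    (fun y => by linarith [intCdf_mono (μ := μ) (sub_le_self y zero_le_one)])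
    (fun y => ?_) (fun y => ?_) (fun T y => ?_) T x
  · simp only [add_sub_cancel_right]
    exact (stationaryWeight_invariant intCdf_mono hM y).le
  · by_cases hy : y = M
    · simp [hy]
    · simp [hm0, Ne.symm hy, stationaryWeight_nonneg intCdf_nonneg intCdf_le_one]
  · have := measureReal_frugalStep_eq_le (hX (T + 1))
      (hind.indepFun_of_recursion hX measurable_frugalStep M hm0 hm T) (hlaw (T + 1)) y
    simp only [← hm] at this
    rwa [add_sub_cancel_right]

theorem frugal1U_median_stability_general
    {Ω : Type*} [MeasureSpace Ω] [IsProbabilityMeasure (ℙ : Measure Ω)]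
    (μ : Measure ℤ) [IsProbabilityMeasure μ]
    (δ : ℝ) (hδ0 : 0 < δ)
    (hmass : ∀ x : ℤ, (μ {x}).toReal ≤ δ)
    (F : ℤ → ℝ) (hF : ∀ x : ℤ, F x = (μ {y : ℤ | y ≤ x}).toReal)
    (s : ℕ → Ω → ℤ) (u : ℕ → Ω → ℝ)
    (hs_meas : ∀ t, Measurable (s t)) (hu_meas : ∀ t, Measurable (u t))
    (hlaw : ∀ t : ℕ, Measure.map (fun ω => (s t ω, u t ω)) ℙ
      = μ.prod (volume.restrict (Set.Icc (0:ℝ) 1)))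
    (hindep : iIndepFun
      (fun t ω => (s t ω, u t ω)) ℙ)
    (m : ℕ → Ω → ℤ)
    (M : ℤ) (hmedian : F M = 1/2)
    (hm0 : ∀ ω, m 0 ω = M)
    (hrec : ∀ t ω, m (t+1) ω =
      if m t ω < s (t+1) ω ∧ (1:ℝ)/2 < u (t+1) ω then m t ω + 1
      else if s (t+1) ω < m t ω ∧ (1:ℝ)/2 < u (t+1) ω then m t ω - 1
      else m t ω)
    (t : ℕ) (ht : 1 ≤ t) (ε : ℝ) (hε0 : 0 < ε) (hε1 : ε < 1) :
    ℙ {ω | 2 * Real.sqrt (δ * Real.log (t / ε)) < |F (m t ω) - 1/2|}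
      ≤ ENNReal.ofReal ε := by
  obtain rfl : F = intCdf μ := funext hF
  set X : ℕ → Ω → ℤ × ℝ := fun t ω => (s t ω, u t ω)
  have hX : ∀ i, Measurable (X i) := fun i => (hs_meas i).prodMk (hu_meas i)
  have hstep : ∀ T ω, m (T + 1) ω = frugalStep (m T ω) (X (T + 1) ω) := hrec
  set a := Real.sqrt (δ * Real.log (t / ε))
  have hMbad : M ∉ {x | 2 * a < |intCdf μ x - 1 / 2|} := by
    simp only [Set.mem_ofPred_eq, hmedian, sub_self, abs_zero, not_lt]
    exact mul_nonneg zero_le_two (Real.sqrt_nonneg _)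
  rw [← ofReal_measureReal]
  refine ENNReal.ofReal_le_ofReal ?_
  rcases lt_or_ge (t : ℝ) (2 * ε) with hsmall | hlarge
  · -- then `t = 1`, and the walk has left `M` only if `u 1 > 1/2`
    obtain rfl : t = 1 := by
      have : t < 2 := by exact_mod_cast (show (t : ℝ) < 2 by linarith)
      omega
    calc volume.real {ω | 2 * a < |intCdf μ (m 1 ω) - 1 / 2|}
        ≤ volume.real {ω | frugalStep M (X 1 ω) ≠ M} :=
          measureReal_mono (fun ω hω h => hMbad (by rwa [← h, ← hm0 ω, ← hstep]))
            (measure_ne_top _ _)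
      _ ≤ 1 / 2 := measureReal_frugalStep_ne_le (hX 1) (hlaw 1) M
      _ ≤ ε := by push_cast at hsmall; linarith
  have hL : 0 < Real.log (t / ε) := Real.log_pos (by rw [lt_div_iff₀ hε0]; linarith)
  have ha2 : a ^ 2 / δ = Real.log (t / ε) := by
    rw [Real.sq_sqrt (by positivity)]
    field_simp
  have hjump : ∀ x, intCdf μ x - intCdf μ (x - 1) ≤ δ := fun x =>
    measureReal_singleton_eq_intCdf_sub (μ := μ) x ▸ hmass x
  have hrange : ∀ ω, |m t ω - M| ≤ t := fun ω => by
    simpa [hm0] using abs_sub_le_of_abs_succ_sub_le (m := fun T => m T ω)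
      (fun T => hstep T ω ▸ abs_frugalStep_sub_le _ _) t
  have hbad : ∀ x ∈ {x | 2 * a < |intCdf μ x - 1 / 2|},
      volume.real {ω | m t ω = x} ≤ Real.exp (1 - 4 * Real.log (t / ε)) := fun x hx =>
    (measureReal_eq_le_stationaryWeight hX hindep hlaw hmedian hm0 hstep t x).trans
      (ha2 ▸ stationaryWeight_le_exp (Real.sqrt_pos.2 (by positivity)) hδ0
        intCdf_mono intCdf_nonneg intCdf_le_one hmedian hjump hx)
  exact (measureReal_mem_le_of_abs_sub_le hrange hMbad (Real.exp_pos _).le hbad).trans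
    (two_mul_mul_exp_le hε0 hlarge)

/-- If the Frugal-1U median process starts at the true median
(`m̃₀ = M` with `F(M) = 1/2`), then for every `t ≥ 1` and `ε ∈ (0,1)`,
`Pr[|F(m̃_t) − 1/2| > 2√(δ·ln(t/ε))] ≤ ε`. -/
theorem frugal1U_median_stability
    {Ω : Type*} [MeasureSpace Ω] [IsProbabilityMeasure (ℙ : Measure Ω)]
    (μ : Measure ℤ) [IsProbabilityMeasure μ]
    (δ : ℝ) (hδ0 : 0 < δ) (hδ1 : δ < 1)
    (hmass : ∀ x : ℤ, (μ {x}).toReal ≤ δ)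
    (F : ℤ → ℝ) (hF : ∀ x : ℤ, F x = (μ {y : ℤ | y ≤ x}).toReal)
    (s : ℕ → Ω → ℤ) (u : ℕ → Ω → ℝ)
    (hs_meas : ∀ t, Measurable (s t)) (hu_meas : ∀ t, Measurable (u t))
    (hlaw : ∀ t : ℕ, Measure.map (fun ω => (s t ω, u t ω)) ℙ
      = μ.prod (volume.restrict (Set.Icc (0:ℝ) 1)))
    (hindep : iIndepFun
      (fun t ω => (s t ω, u t ω)) ℙ)
    (m : ℕ → Ω → ℤ)
    (M : ℤ) (hmedian : F M = 1/2)
    (hm0 : ∀ ω, m 0 ω = M)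
    (hrec : ∀ t ω, m (t+1) ω =
      if m t ω < s (t+1) ω ∧ (1:ℝ)/2 < u (t+1) ω then m t ω + 1
      else if s (t+1) ω < m t ω ∧ (1:ℝ)/2 < u (t+1) ω then m t ω - 1
      else m t ω)
    (t : ℕ) (ht : 1 ≤ t) (ε : ℝ) (hε0 : 0 < ε) (hε1 : ε < 1) :
    ℙ {ω | 2 * Real.sqrt (δ * Real.log (t / ε)) < |F (m t ω) - 1/2|}
      ≤ ENNReal.ofReal ε :=
  frugal1U_median_stability_general μ δ hδ0 hmass F hF s u hs_meas hu_meas hlaw hindep m M hmedian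
    hm0 hrec t ht ε hε0 hε1
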